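/- Suppose k_{n_1,m_2} = 0 and write j = j_{n_1,m_2}. Let P be a regular partition of K_{m_1(n_1),m_2(n_2)} such that τ(P) is asymmetric, and let G be a connected component of τ'(P) that is a tree with at least 2 edges, having l leaves and d = d(G) defects. Then v(G) ≤ m_2 - 2j - l - j·μ(G) - d. -/

import Mathlib

/-!
Let `G` be the tree, `V₁` its degree-one vertices and `V₂` the others. Counting incidences
(`n₁|E|`) against `|V| = (n₁-1)|E| + 1` gives `|V₂| = |E| - 1 - μ` and
`|V₁| = (n₁-2)|E| + 2 + μ`. Filling every vertex of `V₂` up to weight `m₂` and the `y`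
degree-one vertices of every edge up to `w_y` shows `w(G) + d = m₂|V₂| + Σ_e w_{y_e}`: by
asymmetry the degree-one vertices of an edge are not twins, so they carry `y_e` distinct labels,
and `y` distinct subsets of an `m₂`-set have total size at most `w_y`. Since `G` has two edges,
every edge has a vertex in `V₂`, so `y_e ≤ n₁ - 1`, with equality exactly at the leaves. Now
`n₁ - 2 = Σ_{i ≤ j} C(m₂,i)`, below which `y ↦ w_y` increases by at least `m₂ - j` per step,
while the step to `n₁ - 1` adds `m₂ - j - 1`. Comparing each `w_{y_e}` with `w_{n₁-2}` and
using `Σ_e (y_e - (n₁-2)) = 2 + μ` gives the bound, with `r·m₂ = m₂ + w_{n₁-2}`.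
-/
/-- Vertex type of the complete multipartite graph with `m1` parts of size `n1`
and `m2` parts of size `n2`.  The parts of size `n2` are indexed by `Fin m2`
(these play the role of `X_1, …, X_{m2}` in the paper). -/
abbrev MPV (m1 n1 m2 n2 : ℕ) : Type :=
  (Fin m1 × Fin n1) ⊕ (Fin m2 × Fin n2)

/-- The part (maximal independent set) containing a vertex. -/
def partOf {m1 n1 m2 n2 : ℕ} (v : MPV m1 n1 m2 n2) : Fin m1 ⊕ Fin m2 :=
  Sum.map Prod.fst Prod.fst v

/-- The complete multipartite graph `K_{m1(n1), m2(n2)}`. -/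
def KMP (m1 n1 m2 n2 : ℕ) : SimpleGraph (MPV m1 n1 m2 n2) :=
  SimpleGraph.comap partOf ⊤

/-- `P` is a regular partition: a partition of the vertex set each of whose parts
meets each maximal independent set in at most one vertex. -/
def IsRegularPartition {m1 n1 m2 n2 : ℕ} (P : Set (Set (MPV m1 n1 m2 n2))) : Prop :=
  Setoid.IsPartition P ∧
    ∀ p ∈ P, ∀ i : Fin m1 ⊕ Fin m2, {v | v ∈ p ∧ partOf v = i}.Subsingleton

/-- The incidence relation of the hypergraph `τ(P)`: its vertices are the parts of `P`,
its edges are the maximal independent sets, and a part is incident to a maximal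
independent set iff they intersect (for a regular partition, iff they intersect in
exactly one vertex). -/
def tauInc {m1 n1 m2 n2 : ℕ} (P : Set (Set (MPV m1 n1 m2 n2))) :
    ↥P → (Fin m1 ⊕ Fin m2) → Prop :=
  fun p i => ∃ v ∈ p.1, partOf v = i

/-- A hypergraph, given by its incidence relation, is asymmetric: its only
automorphism (pair of permutations of vertices and edges preserving incidence)
is the identity. -/
def HypAsymmetric {Vh Eh : Type*} (I : Vh → Eh → Prop) : Prop :=
  ∀ (σ : Equiv.Perm Vh) (τ : Equiv.Perm Eh),
    (∀ v e, I v e ↔ I (σ v) (τ e)) → σ = 1 ∧ τ = 1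

variable {m1 n1 m2 n2 : ℕ}

/-- Incidence of the hypergraph `τ'(P)`: only the `m1` edges of size `n1` are kept. -/
def tauInc' (P : Set (Set (MPV m1 n1 m2 n2))) (p : ↥P) (j : Fin m1) : Prop :=
  tauInc P p (Sum.inl j)

/-- The label of a vertex of `τ'(P)`: the set of indices `i ≤ m2` with the vertex
incident to the `n2`-edge `X_i`. -/
def labelOf (P : Set (Set (MPV m1 n1 m2 n2))) (p : ↥P) : Set (Fin m2) :=
  {i | tauInc P p (Sum.inr i)}

/-- The weight of a vertex of `τ'(P)`: the cardinality of its label. -/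
noncomputable def wtv (P : Set (Set (MPV m1 n1 m2 n2))) (p : ↥P) : ℕ :=
  (labelOf P p).ncard

/-- The degree of a vertex in `τ'(P)`. -/
noncomputable def degE (P : Set (Set (MPV m1 n1 m2 n2))) (p : ↥P) : ℕ :=
  {j : Fin m1 | tauInc' P p j}.ncard

/-- The incidence (bipartite) graph of `τ'(P)`, used to speak about its connected
components. -/
def incTG (P : Set (Set (MPV m1 n1 m2 n2))) : SimpleGraph (↥P ⊕ Fin m1) :=
  SimpleGraph.fromRel (fun a b => ∃ p j, a = Sum.inl p ∧ b = Sum.inr j ∧ tauInc' P p j)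

/-- The vertex set of a connected component of `τ'(P)`. -/
def compV (P : Set (Set (MPV m1 n1 m2 n2))) (c : (incTG P).ConnectedComponent) :
    Set ↥P :=
  {p | (incTG P).connectedComponentMk (Sum.inl p) = c}

/-- The edge set of a connected component of `τ'(P)`. -/
def compE (P : Set (Set (MPV m1 n1 m2 n2))) (c : (incTG P).ConnectedComponent) :
    Set (Fin m1) :=
  {j | (incTG P).connectedComponentMk (Sum.inr j) = c}

/-- The weight `w(G)` of a connected component `G` of `τ'(P)`. -/
noncomputable def wComp (P : Set (Set (MPV m1 n1 m2 n2)))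
    (c : (incTG P).ConnectedComponent) : ℕ :=
  ∑ᶠ p ∈ compV P c, wtv P p

/-- `μ(G) = Σ_{v : deg v > 2} (deg v - 2)` for a component `G` of `τ'(P)`. -/
noncomputable def muComp (P : Set (Set (MPV m1 n1 m2 n2)))
    (c : (incTG P).ConnectedComponent) : ℕ :=
  ∑ᶠ p ∈ compV P c, (degE P p - 2)

/-- `deg_1(e)`: the number of degree-1 vertices of the edge `e` of `τ'(P)`. -/
noncomputable def deg1E (P : Set (Set (MPV m1 n1 m2 n2))) (e : Fin m1) : ℕ :=
  {p | tauInc' P p e ∧ degE P p = 1}.ncard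

/-- The total weight of the degree-1 vertices of the edge `e` of `τ'(P)`. -/
noncomputable def wSE (P : Set (Set (MPV m1 n1 m2 n2))) (e : Fin m1) : ℕ :=
  ∑ᶠ p ∈ {p | tauInc' P p e ∧ degE P p = 1}, wtv P p

/-- `Σ_{i=0}^{t-1} C(m,i)`. -/
def binPartial (m t : ℕ) : ℕ :=
  ∑ i ∈ Finset.range t, Nat.choose m i

/-- The largest `t` (with `t = j' + 1` in the notation of the paper) such that
`Σ_{i=0}^{t-1} C(m,i) ≤ y`. -/
def wBt (m y : ℕ) : ℕ :=
  Nat.findGreatest (fun t => binPartial m t ≤ y) (m + 1)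

/-- The quantity `w_y`: writing `y = Σ_{i=0}^{j'} C(m,i) + k'` with `j' ≥ -1` and either
`0 ≤ k' < C(m,j'+1)`, or `k' = 0` and `j' = m`, define
`w_y = Σ_{i=0}^{j'} (m-i)·C(m,i) + k'(m-j'-1)`. -/
def wB (m y : ℕ) : ℕ :=
  (∑ i ∈ Finset.range (wBt m y), (m - i) * Nat.choose m i)
    + (y - binPartial m (wBt m y)) * (m - wBt m y)

/-- The number of defects `d(G)` of a component `G` of `τ'(P)`, counted with
multiplicity: each vertex `v` of degree at least `2` contributes `m2 - w(v)`, and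
each edge `e` contributes `w_{deg_1 e}` minus the weight of its degree-1 vertices. -/
noncomputable def dComp (P : Set (Set (MPV m1 n1 m2 n2)))
    (c : (incTG P).ConnectedComponent) : ℕ :=
  (∑ᶠ p ∈ {p ∈ compV P c | 2 ≤ degE P p}, (m2 - wtv P p))
    + ∑ᶠ e ∈ compE P c, (wB m2 (deg1E P e) - wSE P e)

lemma binPartial_succ (m t : ℕ) : binPartial m (t + 1) = binPartial m t + m.choose t :=
  Finset.sum_range_succ _ _

lemma binPartial_mono (m : ℕ) : Monotone (binPartial m) := fun _ _ h =>
  Finset.sum_le_sum_of_subset (Finset.range_subset_range.2 h)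

lemma binPartial_succ_self (m : ℕ) : binPartial m (m + 1) = 2 ^ m :=
  Nat.sum_range_choose m

lemma binPartial_add_one_le {m t : ℕ} (ht : t ≤ m) :
    binPartial m t + 1 ≤ binPartial m (t + 1) := by
  rw [binPartial_succ]
  exact Nat.add_le_add_left (Nat.choose_pos ht) _

lemma binPartial_lt_two_pow {m t : ℕ} (ht : t ≤ m) : binPartial m t < 2 ^ m :=
  calc binPartial m t ≤ binPartial m m := binPartial_mono m ht
    _ < binPartial m (m + 1) := binPartial_add_one_le le_rfl
    _ = 2 ^ m := binPartial_succ_self m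

lemma binPartial_wBt_le (m y : ℕ) : binPartial m (wBt m y) ≤ y :=
  Nat.findGreatest_spec (P := fun t => binPartial m t ≤ y) (Nat.zero_le _)
    (by simp [binPartial])

lemma wBt_eq {m y t : ℕ} (ht : t ≤ m + 1) (h₁ : binPartial m t ≤ y)
    (h₂ : y < binPartial m (t + 1)) : wBt m y = t := by
  refine le_antisymm ?_ (Nat.le_findGreatest ht h₁)
  by_contra! hlt
  have := binPartial_mono m (show t + 1 ≤ wBt m y by omega)
  have := binPartial_wBt_le m y
  omega

lemma wBt_two_pow (m : ℕ) : wBt m (2 ^ m) = m + 1 :=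
  Nat.findGreatest_eq (binPartial_succ_self m).le

lemma wBt_lt {m y t : ℕ} (h : y < binPartial m t) : wBt m y < t := by
  by_contra! hle
  have := binPartial_mono m hle
  have := binPartial_wBt_le m y
  omega

lemma wB_eq {m y t : ℕ} (ht : t ≤ m) (h₁ : binPartial m t ≤ y)
    (h₂ : y ≤ binPartial m (t + 1)) :
    wB m y = (∑ i ∈ Finset.range t, (m - i) * m.choose i) + (y - binPartial m t) * (m - t) := by
  rcases h₂.lt_or_eq with h₂ | rfl
  · rw [wB, wBt_eq (by omega) h₁ h₂]
  have hC : binPartial m (t + 1) - binPartial m t = m.choose t := by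
    rw [binPartial_succ]; omega
  rcases ht.lt_or_eq with ht | rfl
  · have hnext : binPartial m (t + 1 + 1) > binPartial m (t + 1) :=
      binPartial_add_one_le (t := t + 1) ht
    rw [wB, wBt_eq (by omega) le_rfl hnext, Finset.sum_range_succ, hC]
    simp [mul_comm]
  · rw [wB, binPartial_succ_self, wBt_two_pow, Finset.sum_range_succ]
    simp

lemma wB_zero (m : ℕ) : wB m 0 = 0 := by
  simpa [binPartial] using wB_eq (m := m) (y := 0) (t := 0) (Nat.zero_le _) le_rfl
    (Nat.zero_le _)

lemma wB_succ {m y : ℕ} (hy : y < 2 ^ m) : wB m (y + 1) = wB m y + (m - wBt m y) := by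
  have h₁ := binPartial_wBt_le m y
  have ht : wBt m y ≤ m := by
    by_contra! h
    have htop : wBt m y = m + 1 := le_antisymm (Nat.findGreatest_le _) h
    rw [htop, binPartial_succ_self] at h₁
    omega
  have hlt : y < binPartial m (wBt m y + 1) := by
    by_contra! h
    have : wBt m y + 1 ≤ wBt m y := Nat.le_findGreatest (by omega) h
    omega
  rw [wB_eq ht h₁ hlt.le, wB_eq ht (by omega) hlt, show y + 1 - binPartial m (wBt m y) =
    y - binPartial m (wBt m y) + 1 by omega]
  ring

lemma wB_binPartial {m t : ℕ} (ht : t ≤ m) :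
    wB m (binPartial m t) = ∑ i ∈ Finset.range t, (m - i) * m.choose i := by
  simpa using wB_eq ht le_rfl ((binPartial_mono m) t.le_succ)

lemma wB_binPartial_add_one {m t : ℕ} (ht : t ≤ m) :
    wB m (binPartial m t + 1) = wB m (binPartial m t) + (m - t) := by
  rw [wB_eq ht (by omega) (binPartial_add_one_le ht), wB_binPartial ht]
  simp

lemma one_add_sum_div_mul_eq {m t : ℕ} (ht : t ≤ m) :
    (1 + ∑ i ∈ Finset.range t, ((m - i : ℝ) / m) * m.choose i) * m
      = m + wB m (binPartial m t) := by
  rw [wB_binPartial ht, add_mul, one_mul, Finset.sum_mul]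
  push_cast
  refine congrArg _ (Finset.sum_congr rfl fun i hi => ?_)
  rw [Nat.cast_sub (by simp at hi; omega)]
  have : (m : ℝ) ≠ 0 := by simp at hi; exact_mod_cast (show m ≠ 0 by omega)
  field_simp

/-- Below `binPartial m t` every increment `m - wBt m z` of `w` is at least `m + 1 - t`. -/
lemma wB_add_mul_le {m t : ℕ} (ht : t ≤ m) {y k : ℕ} (hyk : y + k ≤ binPartial m t) :
    wB m y + k * (m + 1 - t) ≤ wB m (y + k) := by
  induction k with
  | zero => simp
  | succ k ih =>
    have hlt : y + k < binPartial m t := by omega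
    have hstep := wB_succ (lt_trans hlt (binPartial_lt_two_pow ht))
    have hincr : m + 1 - t ≤ m - wBt m (y + k) := by have := wBt_lt hlt; omega
    rw [← add_assoc, hstep, Nat.add_one_mul]
    have := ih (by omega)
    omega

lemma card_filter_card_lt_le (m t : ℕ) :
    (Finset.univ.filter fun S : Finset (Fin m) => S.card < t).card ≤ binPartial m t := by
  have hcover : (Finset.univ.filter fun S : Finset (Fin m) => S.card < t) ⊆
      (Finset.range t).biUnion fun k => Finset.powersetCard k Finset.univ := by
    intro S hS
    simp only [Finset.mem_filter, Finset.mem_univ, true_and] at hS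
    simpa using hS
  refine (Finset.card_le_card hcover).trans (Finset.card_biUnion_le.trans_eq ?_)
  simp [binPartial]

/-- Fewer than `binPartial m (wBt m n) ≤ n` subsets of `Fin m` have more than
`m - wBt m n` elements (by complementation), so `n + 1` distinct subsets contain a small one. -/
lemma exists_card_le_of_lt_card {m n : ℕ} {F : Finset (Finset (Fin m))} (hn : n < F.card) :
    ∃ S ∈ F, S.card ≤ m - wBt m n := by
  by_contra! hbig
  have hcompl : (F.image compl).card ≤
      (Finset.univ.filter fun S : Finset (Fin m) => S.card < wBt m n).card := by
    refine Finset.card_le_card fun S hS => ?_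
    obtain ⟨T, hT, rfl⟩ := Finset.mem_image.mp hS
    have := hbig T hT
    have := T.card_le_univ
    simp only [Finset.mem_filter, Finset.mem_univ, true_and, Finset.card_compl,
      Fintype.card_fin] at *
    omega
  rw [Finset.card_image_of_injective _ compl_injective] at hcompl
  have := card_filter_card_lt_le m (wBt m n)
  have := binPartial_wBt_le m n
  omega

lemma sum_card_le_wB (m : ℕ) (F : Finset (Finset (Fin m))) :
    ∑ S ∈ F, S.card ≤ wB m F.card := by
  induction hF : F.card generalizing F with
  | zero => simp [Finset.card_eq_zero.mp hF, wB_zero]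
  | succ n ih =>
    obtain ⟨S, hS, hSsmall⟩ := exists_card_le_of_lt_card (F := F) (n := n) (by omega)
    have hpow : n < 2 ^ m := by
      have := F.card_le_univ
      rw [Fintype.card_finset, Fintype.card_fin] at this
      omega
    have hrest := ih (F.erase S) (by rw [Finset.card_erase_of_mem hS, hF]; rfl)
    rw [← Finset.add_sum_erase F _ hS, wB_succ hpow]
    omega

lemma wB_add_ite_le {m t y : ℕ} (ht : t ≤ m) (hy : y ≤ binPartial m t + 1) :
    (wB m y : ℤ) + (if y = binPartial m t + 1 then 1 else 0)
      ≤ wB m (binPartial m t) + ((y : ℤ) - binPartial m t) * (m + 1 - t) := by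
  split_ifs with hleaf
  · subst hleaf
    rw [wB_binPartial_add_one ht]
    push_cast [ht]
    linarith
  · have h := wB_add_mul_le ht (y := y) (k := binPartial m t - y) (by omega)
    rw [Nat.add_sub_cancel' (by omega)] at h
    zify [show t ≤ m + 1 by omega, show y ≤ binPartial m t by omega] at h
    linarith

lemma HypAsymmetric.eq_of_forall_iff {Vh Eh : Type*} {I : Vh → Eh → Prop}
    (hI : HypAsymmetric I) {p q : Vh} (hpq : ∀ e, I p e ↔ I q e) : p = q := by
  classical
  have hswap : ∀ v e, I v e ↔ I (Equiv.swap p q v) ((1 : Equiv.Perm Eh) e) := by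
    intro v e
    rcases eq_or_ne v p with rfl | hvp
    · simpa using hpq e
    rcases eq_or_ne v q with rfl | hvq
    · simpa using (hpq e).symm
    simp [Equiv.swap_apply_of_ne_of_ne hvp hvq]
  have := congrArg (· p) (hI _ _ hswap).1
  simpa using this.symm

lemma SimpleGraph.Reachable.mem_of_adj_closed {V : Type*} {G : SimpleGraph V} {S : Set V}
    (hS : ∀ x y, x ∈ S → G.Adj x y → y ∈ S) {x y : V} (hx : x ∈ S) (h : G.Reachable x y) :
    y ∈ S := by
  rw [SimpleGraph.reachable_iff_reflTransGen] at h
  induction h with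
  | refl => exact hx
  | tail _ hadj ih => exact hS _ _ ih hadj

section Incidence

variable {P : Set (Set (MPV m1 n1 m2 n2))}

variable (P) in
noncomputable def incEdges (p : ↥P) : Finset (Fin m1) :=
  (Set.toFinite {e | tauInc' P p e}).toFinset

variable (P) in
noncomputable def incVerts (e : Fin m1) : Finset ↥P :=
  (Set.toFinite {p | tauInc' P p e}).toFinset

variable (P) in
noncomputable def pendantVerts (e : Fin m1) : Finset ↥P :=
  (Set.toFinite {p | tauInc' P p e ∧ degE P p = 1}).toFinset

@[simp] lemma mem_incEdges {p : ↥P} {e : Fin m1} : e ∈ incEdges P p ↔ tauInc' P p e :=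
  Set.Finite.mem_toFinset _

@[simp] lemma mem_incVerts {p : ↥P} {e : Fin m1} : p ∈ incVerts P e ↔ tauInc' P p e :=
  Set.Finite.mem_toFinset _

@[simp] lemma mem_pendantVerts {p : ↥P} {e : Fin m1} :
    p ∈ pendantVerts P e ↔ tauInc' P p e ∧ degE P p = 1 :=
  Set.Finite.mem_toFinset _

lemma degE_eq_card (p : ↥P) : degE P p = (incEdges P p).card :=
  Set.ncard_eq_toFinset_card _ _

lemma deg1E_eq_card (e : Fin m1) : deg1E P e = (pendantVerts P e).card :=
  Set.ncard_eq_toFinset_card _ _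

lemma wSE_eq_sum (e : Fin m1) : wSE P e = ∑ p ∈ pendantVerts P e, wtv P p := by
  rw [wSE, ← finsum_mem_coe_finset, pendantVerts, Set.Finite.coe_toFinset]

lemma wtv_le (p : ↥P) : wtv P p ≤ m2 :=
  (Set.ncard_le_card _).trans_eq (Nat.card_eq_fintype_card.trans (Fintype.card_fin m2))

lemma tauInc'_iff_of_mem_pendantVerts {p : ↥P} {e : Fin m1} (hp : p ∈ pendantVerts P e)
    (f : Fin m1) : tauInc' P p f ↔ f = e := by
  rw [mem_pendantVerts, degE_eq_card, Finset.card_eq_one] at hp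
  obtain ⟨hpe, a, ha⟩ := hp
  rw [← mem_incEdges, ha, Finset.mem_singleton]
  rw [← mem_incEdges, ha, Finset.mem_singleton] at hpe
  rw [hpe]

/-- The parts meeting `X_e` are in bijection with the `n1` vertices of `X_e`. -/
lemma card_incVerts (hreg : IsRegularPartition P) (e : Fin m1) : (incVerts P e).card = n1 := by
  choose g hgP hg using fun a : Fin n1 => (hreg.1.2 (Sum.inl (e, a))).exists
  let g' : Fin n1 → ↥P := fun a => ⟨g a, hgP a⟩
  have hinj : Function.Injective g' := by
    intro a a' h
    have hmem : Sum.inl (e, a') ∈ (g' a).1 := h ▸ hg a'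
    simpa using hreg.2 _ (g' a).2 (Sum.inl e) ⟨hg a, rfl⟩ ⟨hmem, rfl⟩
  have himage : Finset.univ.image g' = incVerts P e := by
    ext p
    simp only [Finset.mem_image, Finset.mem_univ, true_and, mem_incVerts]
    constructor
    · rintro ⟨a, rfl⟩
      exact ⟨_, hg a, rfl⟩
    · rintro ⟨⟨e', a⟩ | ⟨i, b⟩, hv, hve⟩ <;> simp only [partOf, Sum.map_inl, Sum.map_inr,
        Sum.inl.injEq, reduceCtorEq] at hve
      subst hve
      exact ⟨a, Subtype.ext ((hreg.1.2 _).unique ⟨hgP a, hg a⟩ ⟨p.2, hv⟩)⟩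
  rw [← himage, Finset.card_image_of_injective _ hinj, Finset.card_univ, Fintype.card_fin]

/-- Two degree-one vertices of the same edge with the same label would be twins in `τ(P)`. -/
lemma labelOf_injOn (hasym : HypAsymmetric (tauInc P)) (e : Fin m1) :
    Set.InjOn (labelOf P) (pendantVerts P e) := by
  intro p hp q hq hlab
  refine hasym.eq_of_forall_iff fun i => ?_
  rcases i with f | i
  · exact (tauInc'_iff_of_mem_pendantVerts hp f).trans
      (tauInc'_iff_of_mem_pendantVerts hq f).symm
  · exact Set.ext_iff.mp hlab i

lemma wSE_le_wB (hasym : HypAsymmetric (tauInc P)) (e : Fin m1) :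
    wSE P e ≤ wB m2 (deg1E P e) := by
  classical
  let lab : ↥P → Finset (Fin m2) := fun p => (Set.toFinite (labelOf P p)).toFinset
  have hinj : Set.InjOn lab (pendantVerts P e) := fun p hp q hq h =>
    labelOf_injOn hasym e hp hq (by
      simpa [lab] using congrArg (fun s : Finset (Fin m2) => (s : Set (Fin m2))) h)
  calc wSE P e = ∑ p ∈ pendantVerts P e, (lab p).card := by
        rw [wSE_eq_sum]; exact Finset.sum_congr rfl fun p _ => Set.ncard_eq_toFinset_card _ _
    _ = ∑ S ∈ (pendantVerts P e).image lab, S.card := (Finset.sum_image hinj).symm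
    _ ≤ wB m2 ((pendantVerts P e).image lab).card := sum_card_le_wB m2 _
    _ = wB m2 (deg1E P e) := by rw [Finset.card_image_of_injOn hinj, deg1E_eq_card]

end Incidence

section Component

variable {P : Set (Set (MPV m1 n1 m2 n2))} {c : (incTG P).ConnectedComponent}

variable (P) in
noncomputable def compVerts (c : (incTG P).ConnectedComponent) : Finset ↥P :=
  (Set.toFinite (compV P c)).toFinset

variable (P) in
noncomputable def compEdges (c : (incTG P).ConnectedComponent) : Finset (Fin m1) :=
  (Set.toFinite (compE P c)).toFinset

@[simp] lemma mem_compVerts {p : ↥P} :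
    p ∈ compVerts P c ↔ (incTG P).connectedComponentMk (Sum.inl p) = c :=
  Set.Finite.mem_toFinset _

@[simp] lemma mem_compEdges {e : Fin m1} :
    e ∈ compEdges P c ↔ (incTG P).connectedComponentMk (Sum.inr e) = c :=
  Set.Finite.mem_toFinset _

lemma ncard_compV : (compV P c).ncard = (compVerts P c).card :=
  Set.ncard_eq_toFinset_card _ _

lemma ncard_compE : (compE P c).ncard = (compEdges P c).card :=
  Set.ncard_eq_toFinset_card _ _

lemma ncard_sep_compE (q : Fin m1 → Prop) [DecidablePred q] :
    {e ∈ compE P c | q e}.ncard = ((compEdges P c).filter q).card := by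
  rw [← Set.ncard_coe_finset, Finset.coe_filter, compEdges]
  simp only [Set.Finite.mem_toFinset]

lemma incTG_adj_inl {p : ↥P} {x : ↥P ⊕ Fin m1} :
    (incTG P).Adj (Sum.inl p) x ↔ ∃ e, x = Sum.inr e ∧ tauInc' P p e := by
  simp only [incTG, SimpleGraph.fromRel_adj]
  constructor
  · rintro ⟨-, ⟨p', e, hp, rfl, h⟩ | ⟨p', e, -, hp, -⟩⟩
    · cases hp
      exact ⟨e, rfl, h⟩
    · cases hp
  · rintro ⟨e, rfl, h⟩
    exact ⟨by simp, Or.inl ⟨p, e, rfl, rfl, h⟩⟩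

lemma incTG_adj_inr {e : Fin m1} {x : ↥P ⊕ Fin m1} :
    (incTG P).Adj (Sum.inr e) x ↔ ∃ p, x = Sum.inl p ∧ tauInc' P p e := by
  rw [SimpleGraph.adj_comm]
  constructor
  · intro h
    rcases x with p | f
    · obtain ⟨f, hf, h⟩ := incTG_adj_inl.mp h
      cases hf
      exact ⟨p, rfl, h⟩
    · simp [incTG] at h
  · rintro ⟨p, rfl, h⟩
    exact incTG_adj_inl.mpr ⟨e, rfl, h⟩

lemma mem_compVerts_iff_mem_compEdges {p : ↥P} {e : Fin m1} (h : tauInc' P p e) :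
    p ∈ compVerts P c ↔ e ∈ compEdges P c := by
  rw [mem_compVerts, mem_compEdges,
    SimpleGraph.ConnectedComponent.sound (incTG_adj_inl.mpr ⟨e, rfl, h⟩).reachable]

lemma one_le_degE {p : ↥P} {e : Fin m1} (hp : p ∈ compVerts P c) (he : e ∈ compEdges P c) :
    1 ≤ degE P p := by
  by_contra! h
  have hnone : ∀ f, ¬ tauInc' P p f := fun f hf => by
    rw [degE_eq_card, Nat.lt_one_iff, Finset.card_eq_zero] at h
    simpa [h] using (mem_incEdges (P := P)).mpr hf
  have hclosed : ∀ x y, x ∈ ({Sum.inl p} : Set _) → (incTG P).Adj x y →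
      y ∈ ({Sum.inl p} : Set _) := by
    rintro x y rfl hxy
    obtain ⟨f, -, hf⟩ := incTG_adj_inl.mp hxy
    exact absurd hf (hnone f)
  have := (SimpleGraph.ConnectedComponent.exact
    ((mem_compVerts.mp hp).trans (mem_compEdges.mp he).symm)).mem_of_adj_closed
    hclosed rfl
  simp at this

/-- If every vertex of `e` had degree one, `e` alone would be a component. -/
lemma exists_two_le_degE {e e' : Fin m1} (he : e ∈ compEdges P c) (he' : e' ∈ compEdges P c)
    (hne : e ≠ e') : ∃ p, tauInc' P p e ∧ 2 ≤ degE P p := by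
  by_contra! h
  let S : Set (↥P ⊕ Fin m1) := {x | x = Sum.inr e ∨ ∃ p, x = Sum.inl p ∧ tauInc' P p e}
  have hclosed : ∀ x y, x ∈ S → (incTG P).Adj x y → y ∈ S := by
    rintro x y (rfl | ⟨p, rfl, hpe⟩) hxy
    · exact Or.inr (incTG_adj_inr.mp hxy)
    · obtain ⟨f, rfl, hpf⟩ := incTG_adj_inl.mp hxy
      have hle : (incEdges P p).card ≤ 1 := by have := h p hpe; rw [degE_eq_card] at this; omega
      exact Or.inl (congrArg _ (Finset.card_le_one.mp hle f (mem_incEdges.mpr hpf) e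
        (mem_incEdges.mpr hpe)))
  rcases (SimpleGraph.ConnectedComponent.exact
    ((mem_compEdges.mp he).trans (mem_compEdges.mp he').symm)).mem_of_adj_closed
    hclosed (Or.inl rfl) with h' | ⟨p, h', -⟩
  · exact hne (Sum.inr_injective h').symm
  · cases h'

lemma deg1E_le (hreg : IsRegularPartition P) (h2 : 2 ≤ (compEdges P c).card) {e : Fin m1}
    (he : e ∈ compEdges P c) : deg1E P e ≤ n1 - 1 := by
  obtain ⟨e', he', hne⟩ := (compEdges P c).exists_mem_ne (by omega) e
  obtain ⟨p, hpe, hp2⟩ := exists_two_le_degE he he' hne.symm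
  have hsub : pendantVerts P e ⊆ (incVerts P e).erase p := fun q hq => by
    rw [mem_pendantVerts] at hq
    exact Finset.mem_erase.mpr ⟨by rintro rfl; omega, mem_incVerts.mpr hq.1⟩
  have := Finset.card_le_card hsub
  rwa [Finset.card_erase_of_mem (mem_incVerts.mpr hpe), card_incVerts hreg,
    ← deg1E_eq_card] at this

lemma wComp_eq_sum : wComp P c = ∑ p ∈ compVerts P c, wtv P p := by
  rw [wComp, ← finsum_mem_coe_finset, compVerts, Set.Finite.coe_toFinset]

lemma muComp_eq_sum : muComp P c = ∑ p ∈ compVerts P c, (degE P p - 2) := by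
  rw [muComp, ← finsum_mem_coe_finset, compVerts, Set.Finite.coe_toFinset]

lemma dComp_eq_sum : dComp P c =
    ∑ p ∈ (compVerts P c).filter (2 ≤ degE P ·), (m2 - wtv P p)
      + ∑ e ∈ compEdges P c, (wB m2 (deg1E P e) - wSE P e) := by
  rw [dComp, ← finsum_mem_coe_finset, ← finsum_mem_coe_finset, Finset.coe_filter, compEdges,
    Set.Finite.coe_toFinset]
  simp only [compVerts, Set.Finite.mem_toFinset]

lemma sum_degE_compVerts (hreg : IsRegularPartition P) :
    ∑ p ∈ compVerts P c, degE P p = n1 * (compEdges P c).card := by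
  classical
  calc ∑ p ∈ compVerts P c, degE P p
      = ∑ p ∈ compVerts P c, ((compEdges P c).bipartiteAbove (tauInc' P) p).card := by
        refine Finset.sum_congr rfl fun p hp => ?_
        rw [degE_eq_card]
        congr 1
        ext e
        simp only [mem_incEdges, Finset.bipartiteAbove, Finset.mem_filter]
        exact ⟨fun h => ⟨(mem_compVerts_iff_mem_compEdges h).mp hp, h⟩, And.right⟩
    _ = ∑ e ∈ compEdges P c, ((compVerts P c).bipartiteBelow (tauInc' P) e).card :=
        Finset.sum_card_bipartiteAbove_eq_sum_card_bipartiteBelow _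
    _ = ∑ e ∈ compEdges P c, n1 := by
        refine Finset.sum_congr rfl fun e he => ?_
        refine (congrArg Finset.card ?_).trans (card_incVerts hreg e)
        ext p
        simp only [mem_incVerts, Finset.bipartiteBelow, Finset.mem_filter]
        exact ⟨And.right, fun h => ⟨(mem_compVerts_iff_mem_compEdges h).mpr he, h⟩⟩
    _ = n1 * (compEdges P c).card := by rw [Finset.sum_const, smul_eq_mul, mul_comm]

lemma sum_filter_degE_eq_one {M : Type*} [AddCommMonoid M] (f : ↥P → M) :
    ∑ p ∈ (compVerts P c).filter (degE P · = 1), f p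
      = ∑ e ∈ compEdges P c, ∑ p ∈ pendantVerts P e, f p := by
  classical
  rw [← Finset.sum_biUnion]
  · congr 1
    ext p
    simp only [Finset.mem_filter, Finset.mem_biUnion, mem_pendantVerts]
    constructor
    · rintro ⟨hp, hdeg⟩
      obtain ⟨e, he⟩ : (incEdges P p).Nonempty := by
        rw [← Finset.card_pos, ← degE_eq_card]; omega
      rw [mem_incEdges] at he
      exact ⟨e, (mem_compVerts_iff_mem_compEdges he).mp hp, he, hdeg⟩
    · rintro ⟨e, he, hpe, hdeg⟩
      exact ⟨(mem_compVerts_iff_mem_compEdges hpe).mpr he, hdeg⟩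
  · intro e _ e' _ hne
    refine Finset.disjoint_left.mpr fun p hp hp' => hne ?_
    exact ((tauInc'_iff_of_mem_pendantVerts hp e').mp (mem_pendantVerts.mp hp').1).symm

lemma sum_compVerts_split (hE : (compEdges P c).Nonempty) (f : ↥P → ℕ) :
    ∑ p ∈ compVerts P c, f p = ∑ p ∈ (compVerts P c).filter (degE P · = 1), f p
      + ∑ p ∈ (compVerts P c).filter (2 ≤ degE P ·), f p := by
  obtain ⟨e, he⟩ := hE
  rw [← Finset.sum_filter_add_sum_filter_not _ (degE P · = 1)]
  congr 2
  refine Finset.filter_congr fun p hp => ?_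
  have := one_le_degE hp he
  omega

lemma sum_degE_eq (hE : (compEdges P c).Nonempty) :
    ∑ p ∈ compVerts P c, degE P p = ((compVerts P c).filter (degE P · = 1)).card
      + muComp P c + 2 * ((compVerts P c).filter (2 ≤ degE P ·)).card := by
  have hV1 : ∑ p ∈ (compVerts P c).filter (degE P · = 1), degE P p
      = ((compVerts P c).filter (degE P · = 1)).card := by
    rw [Finset.card_eq_sum_ones]
    exact Finset.sum_congr rfl fun p hp => (Finset.mem_filter.mp hp).2
  have hμ1 : ∑ p ∈ (compVerts P c).filter (degE P · = 1), (degE P p - 2) = 0 :=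
    Finset.sum_eq_zero fun p hp => by have := (Finset.mem_filter.mp hp).2; omega
  have hV2 : ∑ p ∈ (compVerts P c).filter (2 ≤ degE P ·), degE P p
      = ∑ p ∈ (compVerts P c).filter (2 ≤ degE P ·), (degE P p - 2)
        + 2 * ((compVerts P c).filter (2 ≤ degE P ·)).card := by
    rw [Finset.card_eq_sum_ones, Finset.mul_sum, ← Finset.sum_add_distrib]
    exact Finset.sum_congr rfl fun p hp => by have := (Finset.mem_filter.mp hp).2; omega
  rw [muComp_eq_sum, sum_compVerts_split hE, sum_compVerts_split hE (degE P · - 2), hV1, hμ1,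
    hV2]
  ring

/-- Each vertex of degree `≥ 2` is filled up to weight `m2` by its defects, and each edge's
degree-one vertices up to `w_{deg_1 e}`. -/
lemma wComp_add_dComp (hasym : HypAsymmetric (tauInc P)) (hE : (compEdges P c).Nonempty) :
    wComp P c + dComp P c = m2 * ((compVerts P c).filter (2 ≤ degE P ·)).card
      + ∑ e ∈ compEdges P c, wB m2 (deg1E P e) := by
  have hvert : ∑ p ∈ (compVerts P c).filter (2 ≤ degE P ·), (wtv P p + (m2 - wtv P p))
      = m2 * ((compVerts P c).filter (2 ≤ degE P ·)).card := by
    rw [Finset.sum_congr rfl fun p _ => Nat.add_sub_cancel' (wtv_le p), Finset.sum_const,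
      smul_eq_mul, mul_comm]
  have hedge : ∑ e ∈ compEdges P c, (wSE P e + (wB m2 (deg1E P e) - wSE P e))
      = ∑ e ∈ compEdges P c, wB m2 (deg1E P e) :=
    Finset.sum_congr rfl fun e _ => Nat.add_sub_cancel' (wSE_le_wB hasym e)
  rw [wComp_eq_sum, dComp_eq_sum, sum_compVerts_split hE, sum_filter_degE_eq_one, ← hvert,
    ← hedge, Finset.sum_add_distrib, Finset.sum_add_distrib,
    Finset.sum_congr rfl fun e _ => (wSE_eq_sum e).symm]
  ring

lemma card_compVerts_eq (hE : (compEdges P c).Nonempty) :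
    (compVerts P c).card = ((compVerts P c).filter (degE P · = 1)).card
      + ((compVerts P c).filter (2 ≤ degE P ·)).card := by
  simpa using sum_compVerts_split hE (fun _ => 1)

lemma sum_deg1E : ∑ e ∈ compEdges P c, deg1E P e
    = ((compVerts P c).filter (degE P · = 1)).card := by
  rw [Finset.card_eq_sum_ones, sum_filter_degE_eq_one]
  simp [deg1E_eq_card]

/-- The bound with `t = j + 1` binomial layers: summing `wB_add_ite_le` over the edges, the
`2 + μ(G)` excess degree-one vertices of a tree each cost at least `m2 + 1 - t`. -/
lemma wComp_add_dComp_add_card_leaves_le (hreg : IsRegularPartition P)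
    (hasym : HypAsymmetric (tauInc P)) {t : ℕ} (ht : t ≤ m2) (hn1 : n1 = binPartial m2 t + 2)
    (htree : (compVerts P c).card = (n1 - 1) * (compEdges P c).card + 1)
    (h2 : 2 ≤ (compEdges P c).card) :
    (wComp P c + dComp P c + ((compEdges P c).filter (deg1E P · = n1 - 1)).card : ℤ)
      + (t - 1) * muComp P c + 2 * (t - 1)
      ≤ (m2 + wB m2 (binPartial m2 t)) * (compEdges P c).card + m2 := by
  have hE : (compEdges P c).Nonempty := Finset.card_pos.mp (by omega)
  have hedge : ∀ e ∈ compEdges P c,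
      (wB m2 (deg1E P e) : ℤ) + (if deg1E P e = n1 - 1 then 1 else 0)
        ≤ wB m2 (binPartial m2 t) + ((deg1E P e : ℤ) - binPartial m2 t) * (m2 + 1 - t) := by
    intro e he
    have := deg1E_le hreg h2 he
    rw [show n1 - 1 = binPartial m2 t + 1 by omega] at this ⊢
    exact wB_add_ite_le ht this
  have hsum := Finset.sum_le_sum hedge
  rw [Finset.sum_add_distrib, Finset.sum_boole, Finset.sum_add_distrib, Finset.sum_const,
    ← Finset.sum_mul, Finset.sum_sub_distrib, Finset.sum_const] at hsum
  simp only [nsmul_eq_mul] at hsum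
  have hw := wComp_add_dComp hasym hE
  have hdeg := sum_degE_eq hE
  rw [sum_degE_compVerts hreg] at hdeg
  have hV := card_compVerts_eq hE
  have hpend := sum_deg1E (c := c)
  have hn : (n1 : ℤ) = binPartial m2 t + 2 := by exact_mod_cast hn1
  set V₁ := (compVerts P c).filter (degE P · = 1)
  set V₂ := (compVerts P c).filter (2 ≤ degE P ·)
  zify [show 1 ≤ n1 by omega] at hw hdeg htree hV hpend
  have hV₂ : (V₂.card : ℤ) + muComp P c + 1 = (compEdges P c).card := by
    linear_combination hV - hdeg - htree
  have hV₁ : (V₁.card : ℤ) = binPartial m2 t * (compEdges P c).card + 2 + muComp P c := by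
    linear_combination htree - hV + (compEdges P c).card * hn - hV₂
  linear_combination hsum + hw + (m2 + 1 - t : ℤ) * (hpend + hV₁) + (m2 : ℤ) * hV₂

end Component

theorem tree_component_value_bound_general
    (m1 n1 m2 n2 : ℕ) (hm2 : 1 ≤ m2)
    (j : ℤ) (r : ℝ)
    (hjk : (n1 : ℤ) = 2 + ∑ i ∈ Finset.range (j + 1).toNat, (Nat.choose m2 i : ℤ))
    (hcond : (j < (((m2 - 1) / 2 : ℕ) : ℤ) ∧ (0 : ℤ) < Nat.choose m2 (j + 1).toNat)
      ∨ j = (((m2 - 1) / 2 : ℕ) : ℤ))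
    (hr : r = 1 + ∑ i ∈ Finset.range (j + 1).toNat, ((m2 - i : ℝ) / m2) * Nat.choose m2 i)
    (P : Set (Set (MPV m1 n1 m2 n2)))
    (hreg : IsRegularPartition P) (hasym : HypAsymmetric (tauInc P))
    (c : (incTG P).ConnectedComponent)
    (htree : (compV P c).ncard = (n1 - 1) * (compE P c).ncard + 1)
    (h2 : 2 ≤ (compE P c).ncard)
    (l d : ℕ)
    (hl : l = {e ∈ compE P c | deg1E P e = n1 - 1}.ncard)
    (hd : d = dComp P c) :
    (wComp P c : ℝ) - r * m2 * (compE P c).ncard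
      ≤ (m2 : ℝ) - 2 * j - l - j * (muComp P c) - d := by
  set t := (j + 1).toNat
  have ht : t ≤ m2 := by
    rcases hcond with ⟨-, hpos⟩ | heq
    · by_contra! h
      simp [Nat.choose_eq_zero_of_lt h] at hpos
    · omega
  have hn1 : n1 = binPartial m2 t + 2 := by
    have : (binPartial m2 t : ℤ) = ∑ i ∈ Finset.range t, (m2.choose i : ℤ) := by
      simp [binPartial]
    omega
  rw [ncard_compV, ncard_compE] at htree
  rw [ncard_compE] at h2 ⊢
  have hbound := wComp_add_dComp_add_card_leaves_le hreg hasym ht hn1 htree h2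
  rw [← ncard_sep_compE, ← hl, ← hd] at hbound
  have hboundR : ((wComp P c + d + l : ℤ) + (t - 1) * muComp P c + 2 * (t - 1) : ℝ)
      ≤ (m2 + wB m2 (binPartial m2 t)) * (compEdges P c).card + m2 := by exact_mod_cast hbound
  push_cast at hboundR
  -- `toNat` truncates at `0`, so `j = t - 1` is only guaranteed as an inequality
  have hjt : (j : ℝ) ≤ t - 1 := by exact_mod_cast (show j ≤ (t : ℤ) - 1 by omega)
  have hμ : (0 : ℝ) ≤ muComp P c := Nat.cast_nonneg _
  rw [hr, one_add_sum_div_mul_eq ht]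
  linarith [mul_le_mul_of_nonneg_right hjt hμ]

/-- **Lemma 4.7.** Suppose `k_{n1,m2} = 0` with `j = j_{n1,m2}` (an integer `≥ -1`), so
`r = 1 + Σ_{i=0}^{j} ((m2-i)/m2)·C(m2,i)`.  Let `τ(P)` be asymmetric and let `G` be a
connected component of `τ'(P)` that is a tree with at least `2` edges, with `l` leaves
and `d = d(G)` defects.  Then `v(G) = w(G) - r·m2·|E(G)| ≤ m2 - 2j - l - j·μ(G) - d`. -/
theorem tree_component_value_bound
    (m1 n1 m2 n2 : ℕ) (hn1 : 2 ≤ n1) (hm2 : 1 ≤ m2)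
    (j : ℤ) (r : ℝ)
    (hj : -1 ≤ j)
    (hjk : (n1 : ℤ) = 2 + ∑ i ∈ Finset.range (j + 1).toNat, (Nat.choose m2 i : ℤ))
    (hcond : (j < (((m2 - 1) / 2 : ℕ) : ℤ) ∧ (0 : ℤ) < Nat.choose m2 (j + 1).toNat)
      ∨ j = (((m2 - 1) / 2 : ℕ) : ℤ))
    (hr : r = 1 + ∑ i ∈ Finset.range (j + 1).toNat, ((m2 - i : ℝ) / m2) * Nat.choose m2 i)
    (P : Set (Set (MPV m1 n1 m2 n2)))
    (hreg : IsRegularPartition P) (hasym : HypAsymmetric (tauInc P))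
    (c : (incTG P).ConnectedComponent)
    (htree : (compV P c).ncard = (n1 - 1) * (compE P c).ncard + 1)
    (h2 : 2 ≤ (compE P c).ncard)
    (l d : ℕ)
    (hl : l = {e ∈ compE P c | deg1E P e = n1 - 1}.ncard)
    (hd : d = dComp P c) :
    (wComp P c : ℝ) - r * m2 * (compE P c).ncard
      ≤ (m2 : ℝ) - 2 * j - l - j * (muComp P c) - d :=
  tree_component_value_bound_general m1 n1 m2 n2 hm2 j r hjk hcond hr P hreg hasym c htree h2 l d hl
    hd
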